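/- The residue pairing is invariant under changes of the formal parameter: let φ ∈ ℂ((t)) be a formal power series of order exactly 1, i.e. φ = a₁t + a₂t² + ⋯ with a₁ ≠ 0 (so φ is a nonzero element of the field ℂ((t)), and negative powers φⁿ, n < 0, make sense in ℂ((t))). Then for all Laurent polynomials f, g ∈ ℂ[t,t⁻¹], writing f(φ), g(φ) ∈ ℂ((t)) for the evaluations obtained by substituting φ for t, one has −Res_{t=0}( f(φ) · (g(φ))' ) = −Res_{t=0}( f · g' ), i.e. ⟨f(φ), g(φ)⟩ = ⟨f, g⟩. -/

import Mathlib

/-!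
`D` is a derivation, so `D(φᵏ) = k φᵏ⁻¹ Dφ`, and by bilinearity it suffices to compare monomials:
`tᵐ · D(tⁿ) = n t^(m+n-1)` against `φᵐ · D(φⁿ) = n φ^(m+n-1) Dφ`. For `k ≠ -1` the series
`φᵏ Dφ = D(φᵏ⁺¹) / (k+1)` is a derivative and has no residue, while comparing lowest-order terms
gives `Res φ⁻¹ Dφ = ord φ`. Hence `⟨f(φ), g(φ)⟩ = ord φ · ⟨f, g⟩` for every nonzero `φ`, and here
`ord φ = 1`.
-/

open HahnSeries

/-- Formal derivative on Laurent series: `(D f).coeff n = (n+1) * f.coeff (n+1)`. -/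
noncomputable def D (f : LaurentSeries ℂ) : LaurentSeries ℂ where
  coeff := fun n => ((n + 1 : ℤ) : ℂ) * f.coeff (n + 1)
  isPWO_support' := by
    have himg : (Function.support fun n : ℤ => ((n + 1 : ℤ) : ℂ) * f.coeff (n + 1)) ⊆
        (fun n : ℤ => n - 1) '' f.support := by
      intro n hn
      have h : f.coeff (n + 1) ≠ 0 := by
        intro h
        simp [Function.mem_support, h] at hn
      exact ⟨n + 1, h, by ring⟩
    exact (f.isPWO_support.image_of_monotone
      (fun a b hab => by simpa using sub_le_sub_right hab 1)).mono himg

/-- The residue pairing `⟨f,g⟩ = -Res_{t=0}(f·g')`, i.e. minus the coefficient of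
`t⁻¹` in `f * D g`. -/
noncomputable def resPair (f g : LaurentSeries ℂ) : ℂ := -((f * D g).coeff (-1))

/-- A Laurent polynomial `Σ aₙ tⁿ` (finitely many nonzero `aₙ`, `n ∈ ℤ`) viewed as a
Laurent series. -/
noncomputable def toLS (a : ℤ →₀ ℂ) : LaurentSeries ℂ :=
  a.sum fun n c => HahnSeries.single n c

/-- Evaluation of the Laurent polynomial `Σ aₙ tⁿ` at an invertible Laurent series
`φ`, using the field inverse of `φ` for the negative powers. -/
noncomputable def evalLP (a : ℤ →₀ ℂ) (φ : LaurentSeries ℂ) : LaurentSeries ℂ :=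
  a.sum fun n c => c • φ ^ n

namespace HahnSeries

theorem order_eq_of_forall_lt {Γ R : Type*} [Zero Γ] [LinearOrder Γ] [Zero R]
    {x : HahnSeries Γ R} {a : Γ} (ha : x.coeff a ≠ 0)
    (hlt : ∀ i < a, x.coeff i = 0) : x.order = a :=
  (order_le_of_coeff_ne_zero ha).antisymm <| not_lt.mp fun h =>
    coeff_order_eq_zero.not.mpr (ne_zero_of_coeff_ne_zero ha) |>.elim (hlt _ h)

theorem order_inv {Γ K : Type*} [AddCommGroup Γ] [LinearOrder Γ] [IsOrderedAddMonoid Γ] [Field K]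
    {x : HahnSeries Γ K} (hx : x ≠ 0) : x⁻¹.order = -x.order := by
  have h := order_mul (inv_ne_zero hx) hx
  rw [inv_mul_cancel₀ hx, order_one] at h
  exact eq_neg_of_add_eq_zero_left h.symm

variable {Γ R : Type*} [AddCommMonoid Γ] [LinearOrder Γ] [IsOrderedCancelAddMonoid Γ]
  [NonUnitalNonAssocSemiring R]

theorem coeff_mul_add_of_forall_lt {x y : HahnSeries Γ R} {a b : Γ}
    (hx : ∀ i < a, x.coeff i = 0) (hy : ∀ j < b, y.coeff j = 0) :
    (x * y).coeff (a + b) = x.coeff a * y.coeff b := by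
  rw [coeff_mul]
  refine Finset.sum_eq_single (a, b) (fun ij hij hne => ?_) fun hab => ?_
  · obtain ⟨hi, hj, hij⟩ := Finset.mem_antidiagonal.mp hij
    have ha : a ≤ ij.1 := not_lt.mp fun h => hi (hx _ h)
    have hb : b ≤ ij.2 := not_lt.mp fun h => hj (hy _ h)
    obtain rfl : ij.1 = a := ha.antisymm' <| not_lt.mp fun h =>
      (add_lt_add_of_lt_of_le h hb).ne' hij
    exact (hne (Prod.ext rfl (add_left_cancel hij))).elim
  · by_contra h
    exact hab (Finset.mem_antidiagonal.mpr
      ⟨left_ne_zero_of_mul h, right_ne_zero_of_mul h, rfl⟩)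

instance {R : Type*} [Semiring R] : IsScalarTower R (HahnSeries Γ R) (HahnSeries Γ R) :=
  ⟨fun r x y => by simp only [smul_eq_mul, ← single_zero_mul_eq_smul, mul_assoc]⟩

instance {R : Type*} [CommSemiring R] : SMulCommClass R (HahnSeries Γ R) (HahnSeries Γ R) :=
  ⟨fun r x y => by simp only [smul_eq_mul, ← single_zero_mul_eq_smul, mul_left_comm]⟩

end HahnSeries

namespace LaurentSeries

/-- The Euler operator `t d/dt`. Unlike `D` it preserves supports, which makes its Leibniz rule
a termwise identity; `D = t⁻¹ · euler`. -/
noncomputable def euler (f : LaurentSeries ℂ) : LaurentSeries ℂ where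
  coeff n := n * f.coeff n
  isPWO_support' := f.isPWO_support.mono fun _ hn => right_ne_zero_of_mul hn

@[simp] lemma coeff_euler (f : LaurentSeries ℂ) (n : ℤ) : (euler f).coeff n = n * f.coeff n := rfl

lemma support_euler_subset (f : LaurentSeries ℂ) : (euler f).support ⊆ f.support :=
  fun _ hn => right_ne_zero_of_mul hn

lemma euler_mul (f g : LaurentSeries ℂ) : euler (f * g) = euler f * g + f * euler g := by
  ext n
  rw [coeff_add, coeff_mul_left' f.isPWO_support (support_euler_subset f),
    coeff_mul_right' g.isPWO_support (support_euler_subset g), coeff_euler, coeff_mul,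
    Finset.mul_sum, ← Finset.sum_add_distrib]
  refine Finset.sum_congr rfl fun ij hij => ?_
  rw [← (Finset.mem_antidiagonal.mp hij).2.2, coeff_euler, coeff_euler]
  push_cast
  ring

end LaurentSeries

open LaurentSeries

@[simp] lemma coeff_D (f : LaurentSeries ℂ) (n : ℤ) :
    (D f).coeff n = ((n + 1 : ℤ) : ℂ) * f.coeff (n + 1) := rfl

lemma coeff_D_neg_one (f : LaurentSeries ℂ) : (D f).coeff (-1) = 0 := by simp

lemma D_add (f g : LaurentSeries ℂ) : D (f + g) = D f + D g := by
  ext n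
  simp only [coeff_D, coeff_add]
  ring

lemma D_smul (c : ℂ) (f : LaurentSeries ℂ) : D (c • f) = c • D f := by
  ext n
  simp only [coeff_D, coeff_smul, smul_eq_mul]
  ring

noncomputable def Dₗ : LaurentSeries ℂ →ₗ[ℂ] LaurentSeries ℂ where
  toFun := D
  map_add' := D_add
  map_smul' := D_smul

lemma D_single (n : ℤ) (c : ℂ) : D (single n c) = single (n - 1) (n * c) := by
  ext m
  rw [coeff_D, coeff_single, coeff_single]
  by_cases h : m = n - 1
  · simp [h]
  · simp [h, show m + 1 ≠ n by omega]

lemma D_one : D 1 = 0 := by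
  simpa using D_single 0 1

lemma D_eq_single_mul_euler (f : LaurentSeries ℂ) : D f = single (-1) 1 * euler f := by
  ext n
  rw [coeff_single_mul, one_mul, coeff_D, coeff_euler, sub_neg_eq_add]

lemma D_mul (f g : LaurentSeries ℂ) : D (f * g) = D f * g + f * D g := by
  simp only [D_eq_single_mul_euler, euler_mul]
  ring

lemma D_zpow {φ : LaurentSeries ℂ} (hφ : φ ≠ 0) (k : ℤ) :
    D (φ ^ k) = k * φ ^ (k - 1) * D φ := by
  induction k using Int.induction_on with
  | zero => simp [D_one]
  | succ k ih =>
    rw [zpow_add_one₀ hφ, D_mul, ih, zpow_sub_one₀ hφ, add_sub_cancel_right]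
    push_cast
    field_simp
  | pred k ih =>
    have h := D_mul (φ ^ (-(k : ℤ) - 1)) φ
    rw [← zpow_add_one₀ hφ, sub_add_cancel, ih] at h
    rw [zpow_sub_one₀ hφ (-(k : ℤ) - 1)]
    push_cast at h ⊢
    field_simp
    linear_combination -h

section Residue

variable {φ : LaurentSeries ℂ}

lemma coeff_inv_mul_D_neg_one (hφ : φ ≠ 0) : (φ⁻¹ * D φ).coeff (-1) = φ.order := by
  set n := φ.order
  have hinv : ∀ i < -n, φ⁻¹.coeff i = 0 := fun i hi =>
    coeff_eq_zero_of_lt_order (by rwa [order_inv hφ])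
  have hD : ∀ j < n - 1, (D φ).coeff j = 0 := fun j hj => by
    rw [coeff_D, coeff_eq_zero_of_lt_order (by omega), mul_zero]
  have hlead : φ⁻¹.coeff (-n) * φ.coeff n = 1 := by
    rw [← coeff_mul_add_of_forall_lt hinv fun i hi => coeff_eq_zero_of_lt_order hi,
      inv_mul_cancel₀ hφ, neg_add_cancel, coeff_one, if_pos rfl]
  calc (φ⁻¹ * D φ).coeff (-1) = (φ⁻¹ * D φ).coeff (-n + (n - 1)) := by ring_nf
    _ = φ⁻¹.coeff (-n) * (n * φ.coeff n) := by
      rw [coeff_mul_add_of_forall_lt hinv hD, coeff_D, sub_add_cancel]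
    _ = n := by linear_combination (n : ℂ) * hlead

lemma coeff_zpow_mul_D_neg_one (hφ : φ ≠ 0) (k : ℤ) :
    (φ ^ k * D φ).coeff (-1) = if k = -1 then (φ.order : ℂ) else 0 := by
  split_ifs with hk
  · rw [hk, zpow_neg_one, coeff_inv_mul_D_neg_one hφ]
  · have h := coeff_D_neg_one (φ ^ (k + 1))
    rw [D_zpow hφ, add_sub_cancel_right, mul_assoc, ← single_zero_intCast,
      coeff_single_zero_mul] at h
    exact (mul_eq_zero.mp h).resolve_left (by exact_mod_cast (by omega : k + 1 ≠ 0))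

lemma resPair_smul_zpow (hφ : φ ≠ 0) (m n : ℤ) (c d : ℂ) :
    resPair (c • φ ^ m) (d • φ ^ n) = φ.order * resPair (single m c) (single n d) := by
  have h : (c • φ ^ m) * D (d • φ ^ n) = (c * d * n) • (φ ^ (m + (n - 1)) * D φ) := by
    rw [D_smul, D_zpow hφ, zpow_add₀ hφ, ← single_zero_intCast, single_zero_mul_eq_smul]
    simp only [smul_mul_assoc, mul_smul_comm, smul_smul, mul_assoc]
    congr 1
    ring
  rw [resPair, resPair, h, D_single, single_mul_single, coeff_smul, coeff_single,
    coeff_zpow_mul_D_neg_one hφ, smul_eq_mul, eq_comm (a := (-1 : ℤ))]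
  split_ifs <;> ring

end Residue

noncomputable def resPairₗ : LaurentSeries ℂ →ₗ[ℂ] LaurentSeries ℂ →ₗ[ℂ] ℂ :=
  ((LinearMap.mul ℂ (LaurentSeries ℂ)).compl₂ Dₗ).compr₂ (-coeff.linearMap (-1))

lemma resPairₗ_apply (f g : LaurentSeries ℂ) : resPairₗ f g = resPair f g := rfl

lemma resPair_finsuppSum {α β M N : Type*} [Zero M] [Zero N] (f : α →₀ M) (g : β →₀ N)
    (F : α → M → LaurentSeries ℂ) (G : β → N → LaurentSeries ℂ) :
    resPair (f.sum F) (g.sum G) = f.sum fun a m => g.sum fun b n => resPair (F a m) (G b n) := by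
  simp only [← resPairₗ_apply, map_finsuppSum, LinearMap.finsupp_sum_apply]
  exact Finsupp.sum_comm _ _ _

theorem resPair_evalLP {φ : LaurentSeries ℂ} (hφ : φ ≠ 0) (f g : ℤ →₀ ℂ) :
    resPair (evalLP f φ) (evalLP g φ) = φ.order * resPair (toLS f) (toLS g) := by
  simp only [evalLP, toLS, resPair_finsuppSum, resPair_smul_zpow hφ, Finsupp.mul_sum]

/-- the residue pairing is invariant under changes of the formal
parameter: if `φ = a₁t + a₂t² + ⋯` with `a₁ ≠ 0` (a series of order exactly `1`),
then `⟨f(φ), g(φ)⟩ = ⟨f, g⟩` for all Laurent polynomials `f, g`. -/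
theorem resPair_change_of_parameter (φ : LaurentSeries ℂ)
    (hφ₀ : ∀ n : ℤ, n ≤ 0 → φ.coeff n = 0) (hφ₁ : φ.coeff 1 ≠ 0)
    (f g : ℤ →₀ ℂ) :
    resPair (evalLP f φ) (evalLP g φ) = resPair (toLS f) (toLS g) := by
  have h_order : φ.order = 1 := order_eq_of_forall_lt hφ₁ fun n hn => hφ₀ n (by omega)
  rw [resPair_evalLP (ne_zero_of_coeff_ne_zero hφ₁), h_order, Int.cast_one, one_mul]
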